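/- arXiv:1105.6033 — 2 statements merged into one kernel-verified Lean document; each statement's English description precedes it below -/
import Mathlib

section
/- Let (Ω, 𝓕, P) be a probability space and let X : Ω → (Fin n → ℂ) be a random vector whose coordinates X 0, …, X (n−1) are mutually independent ℂ-valued random variables, each with an atomless law. Then for every ℂ-submodule W of (Fin n → ℂ) with W ≠ ⊤ (i.e., every proper linear subspace), the probability that X ω ∈ W is zero. -/
/-!
A proper subspace `W` lies in the kernel of a nonzero linear functional `∑ cᵢ vᵢ`; pick `j` with
`c_j ≠ 0`. On the event `X ∈ W` the coordinate `X_j` is a measurable function `g` of the other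
coordinates, which are jointly independent of `X_j`. By Fubini the probability of `X_j = g(Y)` is
the average over `y` of `P(X_j = g(y))`, and each of these vanishes because the law of `X_j` has
no atoms.
-/

open MeasureTheory ProbabilityTheory

theorem LinearMap.apply_eq_sum_apply_single_mul {K ι : Type*} [CommSemiring K] [Fintype ι]
    [DecidableEq ι] (φ : (ι → K) →ₗ[K] K) (v : ι → K) :
    φ v = ∑ i, φ (Pi.single i 1) * v i := by
  conv_lhs => rw [← Finset.univ_sum_single v]
  refine (map_sum φ _ _).trans (Finset.sum_congr rfl fun i _ => ?_)
  rw [mul_comm, ← smul_eq_mul, ← map_smul, ← Pi.single_smul', smul_eq_mul, mul_one]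

theorem LinearMap.exists_apply_single_ne_zero {K ι : Type*} [CommSemiring K] [Fintype ι]
    [DecidableEq ι] {φ : (ι → K) →ₗ[K] K} (hφ : φ ≠ 0) : ∃ j, φ (Pi.single j 1) ≠ 0 := by
  by_contra! h
  exact hφ (LinearMap.ext fun v => by simp only [φ.apply_eq_sum_apply_single_mul v, h]; simp)

theorem eq_neg_sum_compl_div_of_sum_mul_eq_zero {K ι : Type*} [Field K] [Fintype ι]
    [DecidableEq ι] {c v : ι → K} {j : ι} (hj : c j ≠ 0) (h : ∑ i, c i * v i = 0) :
    v j = -(∑ i : ({j}ᶜ : Finset ι), c i * v i) / c j := by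
  rw [Fintype.sum_eq_add_sum_compl j, ← Finset.sum_coe_sort] at h
  rw [eq_div_iff hj, mul_comm]
  exact eq_neg_of_add_eq_zero_left h

namespace ProbabilityTheory

variable {Ω α β : Type*} [MeasurableSpace Ω] [MeasurableSpace α] [MeasurableSpace β]
  {μ : Measure Ω}

theorem IndepFun.measure_eq_comp_eq_zero [IsFiniteMeasure μ] [MeasurableEq β]
    {Y : Ω → α} {Z : Ω → β} (hYZ : IndepFun Y Z μ) (hY : AEMeasurable Y μ)
    (hZ : AEMeasurable Z μ) [NullSingletonClass (μ.map Z)] {g : α → β} (hg : Measurable g) :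
    μ {ω | Z ω = g (Y ω)} = 0 := by
  have hgraph : MeasurableSet {p : α × β | p.2 = g p.1} :=
    measurableSet_eq_fun measurable_snd (hg.comp measurable_fst)
  calc μ {ω | Z ω = g (Y ω)} = μ.map (fun ω => (Y ω, Z ω)) {p | p.2 = g p.1} :=
        (Measure.map_apply_of_aemeasurable (hY.prodMk hZ) hgraph).symm
    _ = ∫⁻ y, μ.map Z {g y} ∂μ.map Y := by
        rw [(indepFun_iff_map_prod_eq_prod_map_map hY hZ).1 hYZ, Measure.prod_apply hgraph]
        rfl
    _ = 0 := by simp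

theorem iIndepFun.indepFun_restrict_compl_singleton {ι : Type*} [Fintype ι] [DecidableEq ι]
    {f : ι → Ω → β} (hf : iIndepFun f μ) (hmeas : ∀ i, Measurable (f i)) (j : ι) :
    IndepFun (fun ω (i : ({j}ᶜ : Finset ι)) => f i ω) (f j) μ := by
  have h := (hf.indepFun_finset {j}ᶜ {j} disjoint_compl_left hmeas).comp measurable_id
    (measurable_pi_apply ⟨j, Finset.mem_singleton_self j⟩)
  exact h

end ProbabilityTheory

/-- Appendix D of the paper: a random vector in `ℂⁿ` whose coordinates are mutually
independent random variables with atomless laws lies in any fixed proper linear subspace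
with probability zero. -/
theorem prob_mem_proper_subspace_eq_zero {Ω : Type*} [MeasurableSpace Ω]
    (P : Measure Ω) [IsProbabilityMeasure P] (n : ℕ)
    (X : Ω → Fin n → ℂ) (hX : Measurable X)
    (hInd : iIndepFun (fun i : Fin n => fun ω => X ω i) P)
    (hAtomless : ∀ i : Fin n, NoAtoms (P.map (fun ω => X ω i))) :
    ∀ W : Submodule ℂ (Fin n → ℂ), W ≠ ⊤ → P {ω | X ω ∈ W} = 0 := by
  intro W hW
  obtain ⟨φ, hφ, hWφ⟩ := W.exists_le_ker_of_lt_top hW.lt_top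
  obtain ⟨j, hj⟩ := LinearMap.exists_apply_single_ne_zero hφ
  set c : Fin n → ℂ := fun i => φ (Pi.single i 1)
  have hXi : ∀ i, Measurable fun ω => X ω i := fun i => (measurable_pi_apply i).comp hX
  have hXj : NullSingletonClass (P.map fun ω => X ω j) := hAtomless j
  refine measure_mono_null (fun ω hω => ?_)
    ((hInd.indepFun_restrict_compl_singleton hXi j).measure_eq_comp_eq_zero
      (by fun_prop) (hXi j).aemeasurable
      (g := fun y => -(∑ i : ({j}ᶜ : Finset (Fin n)), c i * y i) / c j) (by fun_prop))
  exact eq_neg_sum_compl_div_of_sum_mul_eq_zero hj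
    ((φ.apply_eq_sum_apply_single_mul (X ω)).symm.trans (hWφ hω))
end

section
/- Let (Ω, 𝓕, P) be a probability space, let M : Ω → Matrix (Fin n) (Fin n) ℂ be a random matrix, and fix an index k : Fin n. Suppose that (a) the k-th row of M, viewed as a random vector ω ↦ (M ω) k in Fin n → ℂ, is independent of the random tuple of all remaining rows of M, and (b) the entries of the k-th row are mutually independent ℂ-valued random variables, each with an atomless law. Then almost surely the k-th row of M does not belong to the ℂ-linear span of the remaining rows of M, i.e., P({ω : (M ω) k ∈ Submodule.span ℂ {(M ω) i : i ≠ k}}) = 0. -/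
/-!
The independence of the `k`-th row from the other rows turns the joint law into a product
measure, and membership of a vector in the span of finitely many others is a σ-compact, hence
measurable, condition. By Fubini it therefore suffices that the row avoids each fixed subspace
spanned by `n - 1` vectors almost surely. The law of the row is a product of atomless laws, and a
proper subspace is, in a suitable coordinate direction, the graph of a function of the other
coordinates, so it is null.
-/

open MeasureTheory ProbabilityTheory Matrix

instance matrixMeasurableSpace {m n α : Type*} [MeasurableSpace α] :
    MeasurableSpace (Matrix m n α) :=
  inferInstanceAs (MeasurableSpace (m → n → α))

theorem IsSigmaCompact.measurableSet {X : Type*} [TopologicalSpace X] [T2Space X]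
    [MeasurableSpace X] [OpensMeasurableSpace X] {s : Set X} (hs : IsSigmaCompact s) :
    MeasurableSet s := by
  obtain ⟨K, hK, rfl⟩ := hs
  exact .iUnion fun n => (hK n).measurableSet

section SpanMembership

variable {𝕜 ι E : Type*} [RCLike 𝕜] [Fintype ι] [NormedAddCommGroup E] [NormedSpace 𝕜 E]
  [FiniteDimensional 𝕜 E]

theorem isSigmaCompact_setOf_mem_span_range :
    IsSigmaCompact {p : (ι → E) × E | p.2 ∈ Submodule.span 𝕜 (Set.range p.1)} := by
  have : ProperSpace E := FiniteDimensional.proper 𝕜 E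
  have hrange : Set.range (fun q : (ι → 𝕜) × (ι → E) => (q.2, ∑ i, q.1 i • q.2 i)) =
      {p : (ι → E) × E | p.2 ∈ Submodule.span 𝕜 (Set.range p.1)} := by
    ext ⟨v, x⟩
    simp [Submodule.mem_span_range_iff_exists_fun]
  rw [← hrange]
  exact isSigmaCompact_range (by fun_prop)

theorem measurableSet_setOf_mem_span_range [MeasurableSpace E] [BorelSpace E] :
    MeasurableSet {p : (ι → E) × E | p.2 ∈ Submodule.span 𝕜 (Set.range p.1)} :=
  have : ProperSpace E := FiniteDimensional.proper 𝕜 E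
  isSigmaCompact_setOf_mem_span_range.measurableSet

end SpanMembership

theorem Submodule.span_range_ne_top_of_card_lt_finrank {R M ι : Type*} [Ring R]
    [StrongRankCondition R] [AddCommGroup M] [Module R M] [Fintype ι]
    (v : ι → M) (h : Fintype.card ι < Module.finrank R M) : Submodule.span R (Set.range v) ≠ ⊤ :=
  (lt_top_of_finrank_lt_finrank ((finrank_range_le_card v).trans_lt h)).ne

theorem Submodule.exists_single_notMem_of_ne_top {R ι : Type*} [Semiring R] [Finite ι]
    [DecidableEq ι] {V : Submodule R (ι → R)} (hV : V ≠ ⊤) : ∃ j, Pi.single j 1 ∉ V := by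
  by_contra! h
  refine hV (eq_top_iff.2 ?_)
  rw [← (Pi.basisFun R ι).span_eq, Submodule.span_le]
  rintro _ ⟨j, rfl⟩
  simpa using h j

theorem Submodule.eq_of_forall_ne_eq_of_single_notMem {K ι : Type*} [DivisionRing K]
    [DecidableEq ι] {V : Submodule K (ι → K)} {j : ι} (hj : Pi.single j 1 ∉ V) {x y : ι → K}
    (hx : x ∈ V) (hy : y ∈ V) (hxy : ∀ i ≠ j, x i = y i) : x = y := by
  have hdiff : x - y = (x j - y j) • Pi.single j 1 := by
    ext i
    by_cases hi : i = j
    · subst hi; simp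
    · simp [hi, hxy i hi]
  by_contra hne
  have hcoeff : x j - y j ≠ 0 := fun h0 => hne <| funext fun i =>
    if hi : i = j then hi ▸ sub_eq_zero.1 h0 else hxy i hi
  exact hj ((V.smul_mem_iff hcoeff).1 (hdiff ▸ V.sub_mem hx hy))

theorem MeasureTheory.Measure.pi_submodule_eq_zero_of_ne_top {𝕜 ι : Type*} [RCLike 𝕜]
    [Fintype ι] {ν : ι → Measure 𝕜} [∀ i, SigmaFinite (ν i)] [∀ i, NullSingletonClass (ν i)]
    {V : Submodule 𝕜 (ι → 𝕜)} (hV : V ≠ ⊤) : Measure.pi ν V = 0 := by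
  classical
  obtain ⟨j, hj⟩ := Submodule.exists_single_notMem_of_ne_top hV
  let e := MeasurableEquiv.piEquivPiSubtypeProd (fun _ : ι => 𝕜) (· = j)
  have hVmeas : MeasurableSet (V : Set (ι → 𝕜)) :=
    (Submodule.closed_of_finiteDimensional V).measurableSet
  have hS : MeasurableSet (e.symm ⁻¹' V) := e.symm.measurable hVmeas
  have : NullSingletonClass (Measure.pi fun i : {i // i = j} => ν i) :=
    Measure.pi_nullSingletonClass ⟨j, rfl⟩
  rw [← ((measurePreserving_piEquivPiSubtypeProd ν (· = j)).symm e).measure_preimage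
    hVmeas.nullMeasurableSet, Measure.prod_apply_symm hS]
  refine (lintegral_congr fun z => Set.Subsingleton.measure_zero ?_ _).trans lintegral_zero
  intro y hy y' hy'
  have := Submodule.eq_of_forall_ne_eq_of_single_notMem hj hy hy' fun i hi => by
    simp [e, MeasurableEquiv.piEquivPiSubtypeProd, hi]
  simpa using congrArg (fun x => (e x).1) this

/-- The core step of Lemma 5 of the paper (Appendix D): if the `k`-th row of a random
`n × n` complex matrix `M` is independent of the tuple of the remaining rows, and the
entries of the `k`-th row are mutually independent with atomless laws, then almost surely
the `k`-th row does not lie in the linear span of the remaining rows. -/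
theorem row_not_in_span_of_indep_atomless {Ω : Type*} [MeasurableSpace Ω]
    (P : Measure Ω) [IsProbabilityMeasure P] (n : ℕ)
    (M : Ω → Matrix (Fin n) (Fin n) ℂ) (hM : Measurable M) (k : Fin n)
    (hRowIndep : IndepFun (fun ω => M ω k)
      (fun ω => fun i : {i : Fin n // i ≠ k} => M ω (i : Fin n)) P)
    (hEntInd : iIndepFun
      (fun j : Fin n => fun ω => M ω k j) P)
    (hAtomless : ∀ j : Fin n, NoAtoms (P.map (fun ω => M ω k j))) :
    P {ω | M ω k ∈ Submodule.span ℂ ((fun i : Fin n => M ω i) '' {i | i ≠ k})} = 0 := by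
  have hMrow (i : Fin n) : Measurable fun ω => M ω i := measurable_pi_apply i |>.comp hM
  have hrow := hMrow k
  have hrest : Measurable fun ω (i : {i : Fin n // i ≠ k}) => M ω i :=
    measurable_pi_lambda _ fun i => hMrow i
  have hS := measurableSet_setOf_mem_span_range (𝕜 := ℂ) (ι := {i : Fin n // i ≠ k})
    (E := Fin n → ℂ)
  have hevent : {ω | M ω k ∈ Submodule.span ℂ ((fun i : Fin n => M ω i) '' {i | i ≠ k})} =
      (fun ω => (fun i : {i : Fin n // i ≠ k} => M ω i, M ω k)) ⁻¹'
        {p | p.2 ∈ Submodule.span ℂ (Set.range p.1)} := by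
    ext ω
    rw [Set.mem_ofPred_eq, Set.image_eq_range]
    rfl
  rw [hevent, ← Measure.map_apply (hrest.prodMk hrow) hS,
    (indepFun_iff_map_prod_eq_prod_map_map hrest.aemeasurable hrow.aemeasurable).1
      hRowIndep.symm]
  have hlaw : P.map (fun ω => M ω k) = Measure.pi fun j => P.map fun ω => M ω k j :=
    hEntInd.map_fun_eq_pi_map fun j => (measurable_pi_apply j |>.comp hrow).aemeasurable
  have hcard : Fintype.card {i : Fin n // i ≠ k} < Module.finrank ℂ (Fin n → ℂ) := by
    simp [Fintype.card_subtype_compl, k.pos]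
  -- `NoAtoms` is a plain alias of `NullSingletonClass`, invisible to instance search.
  have (j : Fin n) : NullSingletonClass (P.map fun ω => M ω k j) := hAtomless j
  refine (Measure.measure_prod_null hS).2 (.of_forall fun v => ?_)
  rw [Pi.zero_apply, hlaw]
  exact Measure.pi_submodule_eq_zero_of_ne_top
    (Submodule.span_range_ne_top_of_card_lt_finrank v hcard)
end
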